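/- arXiv:2504.15505 — 2 statements merged into one kernel-verified Lean document; each statement's English description precedes it below -/
import Mathlib

section
/- Let p > 3 be prime, a ∈ F_p, and c ∈ F_p nonzero. For S_λ = Σ_{x ∈ F_p} σ(x³ + a x² + λ x + c), the variance of (S_λ)_{λ∈F_p} equals p − 1 − σ(−1) − n₃ + σ(c)·Σ_{x ∈ F_p} σ(x³ + a x² − 4c), where n₃ is the number of x ∈ F_p with x³ + a x² − 4c = 0. -/
/-!
Summing over `λ` first, `∑_λ σ(f_λ(x) f_λ(y))` is a character sum of a product of two linear
polynomials in `λ`; for `x, y ≠ 0` it equals `σ(xy) (p [x g(y) = y g(x)] - 1)` with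
`g(x) = x³ + a x² + c`, and `x g(y) - y g(x) = (y - x) (xy(x + y + a) - c)`. So the second moment
is governed by the diagonal and the curve `xy(x + y + a) = c`. On the curve, fixing `s = x + y`
forces `xy = c / (s + a)`, and counting such pairs produces `σ(s³ + a s² - 4c)`; the diagonal
points of the curve are, after `x ↦ 2x`, the roots of `x³ + a x² - 4c`. The mean is `σ(c)`,
since only `x = 0` survives the sum over `λ`.
-/

open Finset

section
variable {F : Type*} [Field F] [Fintype F] [DecidableEq F]

local notation "σ" => quadraticChar F

lemma quadraticChar_sum_mul_add_const (hF : ringChar F ≠ 2) {m : F} (hm : m ≠ 0) (b : F) :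
    ∑ x : F, σ (m * x + b) = 0 := by
  rw [Fintype.sum_equiv ((Equiv.mulLeft₀ m hm).trans (Equiv.addRight b)) (fun x => σ (m * x + b))
    (fun y => σ y) fun _ => rfl]
  exact quadraticChar_sum_zero hF

lemma quadraticChar_sum_sq : ∑ x : F, σ (x ^ 2) = Fintype.card F - 1 := by
  rw [← sum_erase_add _ _ (mem_univ 0), sum_congr rfl fun x hx =>
    quadraticChar_sq_one' (ne_of_mem_erase hx)]
  simp [card_erase_of_mem, Nat.cast_sub Fintype.card_pos]

lemma quadraticChar_sum_mul_self_add (hF : ringChar F ≠ 2) {w : F} (hw : w ≠ 0) :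
    ∑ x : F, σ (x * (x + w)) = -1 := by
  have hJ := jacobiSum_nontrivial_inv (quadraticChar_ne_one hF)
  rw [(quadraticChar_isQuadratic F).inv, jacobiSum] at hJ
  calc ∑ x : F, σ (x * (x + w)) = ∑ t : F, σ (-w * t * (-w * t + w)) :=
        (Fintype.sum_equiv (Equiv.mulLeft₀ (-w) (neg_ne_zero.2 hw)) _ _ fun _ => rfl).symm
    _ = ∑ t : F, σ (-1) * σ (w ^ 2) * (σ t * σ (1 - t)) := by
        refine sum_congr rfl fun t _ => ?_
        rw [← map_mul, ← map_mul, ← map_mul]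
        ring_nf
    _ = -1 := by
        rw [← mul_sum, hJ, quadraticChar_sq_one' hw, mul_one, mul_neg, ← sq,
          quadraticChar_sq_one (neg_ne_zero.2 one_ne_zero)]

lemma quadraticChar_sum_add_mul_add (hF : ringChar F ≠ 2) (u v : F) :
    ∑ l : F, σ ((l + u) * (l + v)) = if u = v then (Fintype.card F : ℤ) - 1 else -1 := by
  rw [← Fintype.sum_equiv (Equiv.subRight u) (fun l => σ (l * (l + (v - u)))) _
    fun l => by simp only [Equiv.subRight_apply]; ring_nf]
  split_ifs with huv
  · simp only [huv, sub_self, add_zero, ← sq]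
    exact quadraticChar_sum_sq
  · exact quadraticChar_sum_mul_self_add hF (sub_ne_zero.2 (Ne.symm huv))

lemma quadraticChar_sum_linear_mul_linear (hF : ringChar F ≠ 2) {x y : F} (hx : x ≠ 0)
    (hy : y ≠ 0) (u v : F) :
    ∑ l : F, σ ((x * l + u) * (y * l + v))
      = σ (x * y) * if u * y = v * x then (Fintype.card F : ℤ) - 1 else -1 := by
  have hfactor : ∀ l, (x * l + u) * (y * l + v) = x * y * ((l + u / x) * (l + v / y)) := by
    intro l; field_simp
  rw [sum_congr rfl fun l _ => by rw [hfactor, map_mul], ← mul_sum,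
    quadraticChar_sum_add_mul_add hF]
  simp only [div_eq_div_iff hx hy]

lemma card_filter_mul_sub_eq (hF : ringChar F ≠ 2) (s q : F) :
    (#{x : F | x * (s - x) = q} : ℤ) = σ (s ^ 2 - 4 * q) + 1 := by
  have h2 : (2 : F) ≠ 0 := Ring.two_ne_zero hF
  rw [← quadraticChar_card_sqrts hF, Set.toFinset_ofPred]
  congr 1
  refine card_nbij' (fun x => 2 * x - s) (fun t => (t + s) / 2) ?_ ?_ ?_ ?_ <;>
    intro x hx <;> simp only [coe_filter, mem_univ, true_and, Set.mem_ofPred_eq] at hx ⊢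
  · rw [← hx]; ring
  · field_simp; linear_combination -hx
  · field_simp; ring
  · field_simp; ring

variable (a : F) {c : F}

lemma quadraticChar_mul_neg_four_mul (hF : ringChar F ≠ 2) (hc : c ≠ 0) :
    σ c * σ (-4 * c) = σ (-1) := by
  rw [← map_mul, show c * (-4 * c) = -1 * (2 * c) ^ 2 by ring, map_mul,
    quadraticChar_sq_one' (mul_ne_zero (Ring.two_ne_zero hF) hc), mul_one]

lemma quadraticChar_sum_curve_fiber (hF : ringChar F ≠ 2) (hc : c ≠ 0) (s : F) :
    ∑ x : F, (if x * (s - x) * (s + a) = c then σ (x * (s - x)) else 0)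
      = σ c * (σ (s + a) + σ (s ^ 3 + a * s ^ 2 - 4 * c)) - if s = -a then σ (-1) else 0 := by
  by_cases hs : s + a = 0
  · obtain rfl : s = -a := eq_neg_of_add_eq_zero_left hs
    have hempty : ∀ x, ¬x * (-a - x) * (-a + a) = c := fun x h =>
      hc (by rw [← h, hs, mul_zero])
    rw [sum_eq_zero fun x _ => if_neg (hempty x),
      show (-a) ^ 3 + a * (-a) ^ 2 - 4 * c = -4 * c by ring, hs, quadraticChar_zero, zero_add,
      quadraticChar_mul_neg_four_mul hF hc, if_pos rfl, sub_self]
  · set q := c / (s + a)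
    have hq : q * (s + a) = c := div_mul_cancel₀ c hs
    have hterm : ∀ x, (if x * (s - x) * (s + a) = c then σ (x * (s - x)) else 0)
        = if x * (s - x) = q then σ q else 0 := fun x => by
      simp only [← eq_div_iff hs]
      split_ifs with h
      · rw [h]
      · rfl
    rw [sum_congr rfl fun x _ => hterm x, sum_ite, sum_const_zero, add_zero, sum_const,
      nsmul_eq_mul, mul_comm, card_filter_mul_sub_eq hF,
      if_neg fun h => hs (by rw [h, neg_add_cancel]), sub_zero]
    have hsq : σ (s + a) ^ 2 = 1 := quadraticChar_sq_one hs
    have h1 : σ q * σ (s + a) = σ c := by rw [← map_mul, hq]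
    have h2 : σ (s ^ 2 - 4 * q) * σ (s + a) = σ (s ^ 3 + a * s ^ 2 - 4 * c) := by
      rw [← map_mul]; congr 1; linear_combination (-4 : F) * hq
    linear_combination (σ (s + a) + σ (s ^ 3 + a * s ^ 2 - 4 * c)) * h1
      + σ q * σ (s + a) * h2 - (σ q * σ (s ^ 2 - 4 * q) + σ q) * hsq

lemma quadraticChar_sum_curve (hF : ringChar F ≠ 2) (hc : c ≠ 0) :
    ∑ x : F, ∑ y : F, (if x * y * (x + y + a) = c then σ (x * y) else 0)
      = σ c * ∑ s : F, σ (s ^ 3 + a * s ^ 2 - 4 * c) - σ (-1) := by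
  have hshear : ∀ x : F, ∑ y : F, (if x * y * (x + y + a) = c then σ (x * y) else 0)
      = ∑ s : F, (if x * (s - x) * (s + a) = c then σ (x * (s - x)) else 0) := fun x =>
    (Fintype.sum_equiv (Equiv.subRight x) _ _ fun s => by
      simp only [Equiv.subRight_apply, add_sub_cancel]).symm
  have hshift : ∑ s : F, σ (s + a) = 0 :=
    (Fintype.sum_equiv (Equiv.addRight a) _ _ fun _ => rfl).trans (quadraticChar_sum_zero hF)
  rw [sum_congr rfl fun x _ => hshear x, sum_comm,
    sum_congr rfl fun s _ => quadraticChar_sum_curve_fiber a hF hc s, sum_sub_distrib, sum_ite_eq',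
    if_pos (mem_univ _), ← mul_sum, sum_add_distrib, hshift, zero_add]

lemma card_filter_curve_diag (hF : ringChar F ≠ 2) :
    #{x : F | x * x * (x + x + a) = c} = #{x : F | x ^ 3 + a * x ^ 2 - 4 * c = 0} := by
  have h2 : (2 : F) ≠ 0 := Ring.two_ne_zero hF
  refine card_nbij' (2 * ·) (· / 2) ?_ ?_ ?_ ?_ <;> intro x hx <;>
    simp only [coe_filter, mem_univ, true_and, Set.mem_ofPred_eq] at hx ⊢
  · linear_combination 4 * hx
  · field_simp; linear_combination 2 * hx
  · field_simp
  · field_simp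

lemma quadraticChar_sum_diag_or_curve (hF : ringChar F ≠ 2) (hc : c ≠ 0) :
    ∑ x : F, ∑ y : F, (if x = y ∨ x * y * (x + y + a) = c then σ (x * y) else 0)
      = Fintype.card F - 1 + (σ c * ∑ s : F, σ (s ^ 3 + a * s ^ 2 - 4 * c) - σ (-1))
        - #{x : F | x ^ 3 + a * x ^ 2 - 4 * c = 0} := by
  have hsplit : ∀ x y : F, (if x = y ∨ x * y * (x + y + a) = c then σ (x * y) else 0)
      = (if x = y then σ (x * y) else 0) + (if x * y * (x + y + a) = c then σ (x * y) else 0)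
        - if x = y then (if x * y * (x + y + a) = c then σ (x * y) else 0) else 0 := by
    intro x y
    by_cases hxy : x = y <;> simp [hxy]
  have hdiag : ∑ x : F, (if x * x * (x + x + a) = c then σ (x * x) else 0)
      = #{x : F | x * x * (x + x + a) = c} := by
    rw [natCast_card_filter]
    refine sum_congr rfl fun x _ => if_ctx_congr Iff.rfl (fun h => ?_) fun _ => rfl
    have hx : x ≠ 0 := by rintro rfl; exact hc (by rw [← h]; ring)
    rw [← sq, quadraticChar_sq_one' hx]
  simp only [hsplit, sum_add_distrib, sum_sub_distrib, sum_ite_eq, mem_univ, if_true]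
  rw [hdiag, card_filter_curve_diag a hF, quadraticChar_sum_curve a hF hc]
  simp only [← sq, quadraticChar_sum_sq]

lemma quadraticChar_sum_const_mul_cubic (hF : ringChar F ≠ 2) (hc : c ≠ 0) {y : F}
    (hy : y ≠ 0) : ∑ l : F, σ (c * (y ^ 3 + a * y ^ 2 + l * y + c)) = 0 := by
  simpa only [show ∀ l, c * (y ^ 3 + a * y ^ 2 + l * y + c)
    = c * y * l + c * (y ^ 3 + a * y ^ 2 + c) by intro l; ring]
    using quadraticChar_sum_mul_add_const hF (mul_ne_zero hc hy) _

lemma quadraticChar_sum_cubic_mul_cubic (hF : ringChar F ≠ 2) (hc : c ≠ 0) (x y : F) :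
    ∑ l : F, σ ((x ^ 3 + a * x ^ 2 + l * x + c) * (y ^ 3 + a * y ^ 2 + l * y + c))
      = (if x = 0 ∧ y = 0 then (Fintype.card F : ℤ) else 0)
        + Fintype.card F * (if x = y ∨ x * y * (x + y + a) = c then σ (x * y) else 0)
        - σ (x * y) := by
  have hzero : ∀ l : F, (0 : F) ^ 3 + a * 0 ^ 2 + l * 0 + c = c := fun l => by ring
  rcases eq_or_ne x 0 with rfl | hx <;> rcases eq_or_ne y 0 with rfl | hy
  · simp [← sq, quadraticChar_sq_one' hc]
  · simp only [hzero, quadraticChar_sum_const_mul_cubic a hF hc hy]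
    simp [hy]
  · simp only [hzero, mul_comm _ c, quadraticChar_sum_const_mul_cubic a hF hc hx]
    simp [hx]
  · have hfactor : ∀ l, (x ^ 3 + a * x ^ 2 + l * x + c) * (y ^ 3 + a * y ^ 2 + l * y + c)
        = (x * l + (x ^ 3 + a * x ^ 2 + c)) * (y * l + (y ^ 3 + a * y ^ 2 + c)) := by
      intro l; ring
    have hcond : (x ^ 3 + a * x ^ 2 + c) * y = (y ^ 3 + a * y ^ 2 + c) * x
        ↔ x = y ∨ x * y * (x + y + a) = c := by
      rw [← sub_eq_zero, show (x ^ 3 + a * x ^ 2 + c) * y - (y ^ 3 + a * y ^ 2 + c) * x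
        = (x - y) * (x * y * (x + y + a) - c) by ring, mul_eq_zero, sub_eq_zero, sub_eq_zero]
    simp only [hfactor, quadraticChar_sum_linear_mul_linear hF hx hy, hcond, hx, false_and,
      if_false, zero_add]
    split_ifs <;> ring

lemma quadraticChar_sum_sum_cubic (hF : ringChar F ≠ 2) :
    ∑ l : F, ∑ x : F, σ (x ^ 3 + a * x ^ 2 + l * x + c) = Fintype.card F * σ c := by
  rw [sum_comm, Fintype.sum_eq_single 0 fun x hx => ?_]
  · simp
  · simpa only [show ∀ l, x ^ 3 + a * x ^ 2 + l * x + c = x * l + (x ^ 3 + a * x ^ 2 + c)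
      by intro l; ring] using quadraticChar_sum_mul_add_const hF hx _

lemma quadraticChar_sum_sq_sum_cubic (hF : ringChar F ≠ 2) (hc : c ≠ 0) :
    ∑ l : F, (∑ x : F, σ (x ^ 3 + a * x ^ 2 + l * x + c)) ^ 2
      = Fintype.card F * (Fintype.card F + σ c * ∑ x : F, σ (x ^ 3 + a * x ^ 2 - 4 * c)
          - σ (-1) - #{x : F | x ^ 3 + a * x ^ 2 - 4 * c = 0}) := by
  have hσσ : ∑ x : F, ∑ y : F, σ (x * y) = 0 := by
    simp only [map_mul, ← mul_sum, quadraticChar_sum_zero hF, mul_zero, sum_const_zero]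
  have hcorner : ∑ x : F, ∑ y : F, (if x = 0 ∧ y = 0 then (Fintype.card F : ℤ) else 0)
      = Fintype.card F := by
    rw [Fintype.sum_eq_single 0 fun x hx => by simp [hx]]
    simp
  simp only [sq (∑ _ : F, _), sum_mul_sum, ← map_mul]
  rw [sum_comm, sum_congr rfl fun x _ => sum_comm]
  simp only [quadraticChar_sum_cubic_mul_cubic a hF hc, sum_add_distrib, sum_sub_distrib,
    ← mul_sum, quadraticChar_sum_diag_or_curve a hF hc, hσσ, hcorner]
  ring

end

theorem stmt7 (p : ℕ) [Fact p.Prime] (hp : 3 < p) (a c : ZMod p) (hc : c ≠ 0) :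
    ((((∑ l : ZMod p, (∑ x : ZMod p, quadraticChar (ZMod p) (x ^ 3 + a * x ^ 2 + l * x + c)) ^ 2) : ℤ) : ℚ) / p) -
      ((((∑ l : ZMod p, ∑ x : ZMod p, quadraticChar (ZMod p) (x ^ 3 + a * x ^ 2 + l * x + c)) : ℤ) : ℚ) / p) ^ 2
      = p - 1 - quadraticChar (ZMod p) (-1)
        - ((Finset.univ.filter fun x : ZMod p => x ^ 3 + a * x ^ 2 - 4 * c = 0).card : ℚ)
        + quadraticChar (ZMod p) c * ((∑ x : ZMod p, quadraticChar (ZMod p) (x ^ 3 + a * x ^ 2 - 4 * c) : ℤ) : ℚ) := by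
  have hF : ringChar (ZMod p) ≠ 2 := by rw [ZMod.ringChar_zmod_n]; omega
  have hσc : (quadraticChar (ZMod p) c : ℚ) ^ 2 = 1 := by exact_mod_cast quadraticChar_sq_one hc
  have hp0 : (p : ℚ) ≠ 0 := Nat.cast_ne_zero.2 (Fact.out : p.Prime).ne_zero
  rw [quadraticChar_sum_sq_sum_cubic a hF hc, quadraticChar_sum_sum_cubic a hF, ZMod.card]
  push_cast
  field_simp
  linear_combination (-1 : ℚ) * hσc
end

section
/- Let p > 3 be prime. For S_λ = Σ_{x ∈ F_p} σ(x³ − x + λ(x² − x)) (the Legendre family up to reparameterization), the variance of (S_λ)_{λ∈F_p} equals p − 2 − 1/p. -/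
/-!
Substituting `x ↦ x - 1` gives `S_λ = Σ_x w(x) χ(x + λ)` with `w(x) = χ((x - 1)(x - 2))`.
Summing over `λ` kills every `χ(x + λ)`, so `E(S) = 0`; and since
`Σ_λ χ(x + λ) χ(y + λ) = p δ_{xy} - 1`, one gets `Σ_λ S_λ² = p Σ w² - (Σ w)² = p (p - 2) - 1`.
-/

open Finset

section QuadraticCharSums

variable {F : Type*} [Field F] [Fintype F] [DecidableEq F]

local notation "χ" => quadraticChar F
local notation "q" => (Fintype.card F : ℤ)

theorem sum_quadraticChar_add (hF : ringChar F ≠ 2) (a : F) : ∑ t : F, χ (a + t) = 0 :=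
  (Fintype.sum_equiv (Equiv.addLeft a) _ _ fun _ => rfl).trans (quadraticChar_sum_zero hF)

theorem sum_quadraticChar_sq_comp (f : F → F) :
    ∑ t : F, χ (f t) ^ 2 = q - #{t | f t = 0} := by
  have h (y : F) : χ y ^ 2 = 1 - if y = 0 then 1 else 0 := by
    split_ifs with hy
    · simp [hy]
    · rw [sub_zero, quadraticChar_sq_one hy]
  simp only [h, sum_sub_distrib, sum_const, card_univ, sum_boole, nsmul_eq_mul, mul_one]

/-- For `t ≠ 0`, `χ (t * (t + c)) = χ (1 + c * t⁻¹)`, and `t ↦ 1 + c * t⁻¹` is a bijection;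
the junk value `0⁻¹ = 0` only costs the term `χ 1 = 1` at `t = 0`. -/
theorem sum_quadraticChar_mul_add (hF : ringChar F ≠ 2) {c : F} (hc : c ≠ 0) :
    ∑ t : F, χ (t * (t + c)) = -1 := by
  have h (t : F) : χ (t * (t + c)) = χ (1 + c * t⁻¹) - if t = 0 then 1 else 0 := by
    split_ifs with ht
    · simp [ht]
    · rw [show t * (t + c) = t ^ 2 * (1 + c * t⁻¹) by field_simp, map_mul,
        quadraticChar_sq_one' ht, one_mul, sub_zero]
  have hbij : Function.Bijective fun t : F => c * t⁻¹ :=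
    (mulLeft_bijective₀ c hc).comp inv_involutive.bijective
  simp only [h, sum_sub_distrib, sum_ite_eq', mem_univ, if_true]
  rw [Fintype.sum_bijective _ hbij _ (fun u => χ (1 + u)) fun _ => rfl,
    sum_quadraticChar_add hF]
  norm_num

theorem sum_quadraticChar_add_mul_add (hF : ringChar F ≠ 2) (a b : F) :
    ∑ t : F, χ ((a + t) * (b + t)) = if a = b then q - 1 else -1 := by
  split_ifs with hab
  · subst hab
    have hzero : ({t | a + t = 0} : Finset F) = {-a} := by
      ext t; simp [add_eq_zero_iff_eq_neg']
    simp only [← sq, map_pow]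
    rw [sum_quadraticChar_sq_comp (a + ·), hzero, card_singleton, Nat.cast_one]
  · rw [← sum_quadraticChar_mul_add hF (sub_ne_zero.mpr (Ne.symm hab))]
    exact Fintype.sum_equiv (Equiv.addLeft a) _ _ fun t => by
      simp only [Equiv.coe_addLeft]; ring_nf

theorem sum_sum_mul_quadraticChar_add (hF : ringChar F ≠ 2) (w : F → ℤ) :
    ∑ l : F, ∑ x : F, w x * χ (x + l) = 0 := by
  rw [sum_comm]
  simp only [← mul_sum, sum_quadraticChar_add hF, mul_zero, sum_const_zero]

theorem sum_sq_sum_mul_quadraticChar_add (hF : ringChar F ≠ 2) (w : F → ℤ) :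
    ∑ l : F, (∑ x : F, w x * χ (x + l)) ^ 2 = q * ∑ x : F, w x ^ 2 - (∑ x : F, w x) ^ 2 :=
  calc ∑ l : F, (∑ x : F, w x * χ (x + l)) ^ 2
      = ∑ x : F, ∑ y : F, w x * w y * ∑ l : F, χ ((x + l) * (y + l)) := by
        simp only [sq, sum_mul_sum, map_mul]
        rw [sum_comm]
        refine sum_congr rfl fun x _ => ?_
        rw [sum_comm]
        exact sum_congr rfl fun y _ => by rw [mul_sum]; exact sum_congr rfl fun l _ => by ring
    _ = ∑ x : F, ∑ y : F, (q * (if x = y then w x * w y else 0) - w x * w y) := by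
        simp only [sum_quadraticChar_add_mul_add hF]
        refine sum_congr rfl fun x _ => sum_congr rfl fun y _ => ?_
        split_ifs <;> ring
    _ = q * ∑ x : F, w x ^ 2 - (∑ x : F, w x) ^ 2 := by
        simp only [sum_sub_distrib, ← mul_sum, sum_ite_eq, mem_univ, if_true, sq, sum_mul_sum]

end QuadraticCharSums

theorem stmt19 (p : ℕ) [Fact p.Prime] (hp : 3 < p) :
    ((((∑ l : ZMod p, (∑ x : ZMod p, quadraticChar (ZMod p) (x ^ 3 - x + l * (x ^ 2 - x))) ^ 2) : ℤ) : ℚ) / p) -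
      ((((∑ l : ZMod p, ∑ x : ZMod p, quadraticChar (ZMod p) (x ^ 3 - x + l * (x ^ 2 - x))) : ℤ) : ℚ) / p) ^ 2
      = p - 2 - 1 / p := by
  have hF : ringChar (ZMod p) ≠ 2 := by rw [ZMod.ringChar_zmod_n]; omega
  have h12 : (1 : ZMod p) ≠ 2 := fun h => one_ne_zero (by linear_combination -h)
  set w : ZMod p → ℤ := fun x => quadraticChar (ZMod p) ((x - 1) * (x - 2)) with hw_def
  have hS (l : ZMod p) : ∑ x : ZMod p, quadraticChar (ZMod p) (x ^ 3 - x + l * (x ^ 2 - x)) =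
      ∑ x : ZMod p, w x * quadraticChar (ZMod p) (x + l) :=
    Fintype.sum_equiv (Equiv.addRight 1) _ _ fun x => by
      rw [Equiv.coe_addRight, hw_def, ← map_mul]; ring_nf
  have hw : ∑ x : ZMod p, w x = -1 := by
    simp only [hw_def, sub_eq_neg_add]
    rw [sum_quadraticChar_add_mul_add hF, if_neg (by simpa [neg_inj] using h12)]
  have hw2 : ∑ x : ZMod p, w x ^ 2 = p - 2 := by
    have hzero : ({x | (x - 1) * (x - 2) = 0} : Finset (ZMod p)) = {1, 2} := by
      ext x; simp [sub_eq_zero]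
    rw [sum_quadraticChar_sq_comp, hzero, card_pair h12, ZMod.card]
    push_cast; ring
  simp only [hS, sum_sum_mul_quadraticChar_add hF, sum_sq_sum_mul_quadraticChar_add hF, hw, hw2,
    ZMod.card]
  have hp0 : (p : ℚ) ≠ 0 := by exact_mod_cast (Fact.out : p.Prime).ne_zero
  field_simp
  push_cast
  ring
end
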